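/- Let d, n ∈ ℕ with n ≥ 1, σ > 0, ε ≥ 0, ε' ≥ 0, C ≥ 0, R ≥ 0. Let μ be a probability measure on ℝᵈ, y ∈ ℝⁿ, f, m : ℝᵈ → ℝⁿ measurable, and K : ℝᵈ → (n×n real matrices) measurable such that, for μ-almost every ψ: (i) for every i, |f(ψ)ᵢ − m(ψ)ᵢ| ≤ ε' and |2yᵢ − f(ψ)ᵢ − m(ψ)ᵢ| ≤ C; (ii) K(ψ) is symmetric positive semidefinite with tr(K(ψ)) ≤ n·ε; (iii) ‖y − m(ψ)‖ ≤ R. Let p = ∫ (2πσ²)^{−n/2} exp(−‖y−f(ψ)‖²/(2σ²)) dμ(ψ) be the exact likelihood and p_D = ∫ (2π)^{−n/2} det(σ²Iₙ + K(ψ))^{−1/2} exp(−½ (y−m(ψ))ᵀ(σ²Iₙ + K(ψ))⁻¹(y−m(ψ))) dμ(ψ) the likelihood of the complete mixed meta-model. Then |p − p_D| ≤ (2πσ²)^{−n/2}·n·C·ε'/(2σ²) + (2π)^{−n/2} σ^{−n} · (n·ε/(2σ²)) · (1 + R²/σ²). -/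

import Mathlib

/-!
Both likelihoods are compared pointwise in `ψ` with the simple mixed meta-model
`(2πσ²)^(-n/2) exp(-‖y - m ψ‖² / (2σ²))`; the pointwise bound then integrates against the
probability measure `μ`.

Exact against simple: `t ↦ exp (-t)` is 1-Lipschitz on `[0, ∞)`, and
`‖y - f‖² - ‖y - m‖² = ∑ᵢ (2yᵢ - fᵢ - mᵢ)(mᵢ - fᵢ)`.

Simple against complete: diagonalising `K = U diag(λ) Uᵀ` turns `σ²I + K` into
`diag(σ² + λᵢ)`. Then `det(σ²I + K)^(-1/2) = σ^(-n) ∏ᵢ (1 + λᵢ/σ²)^(-1/2)` lies between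
`σ^(-n) (1 - tr K/(2σ²))` and `σ^(-n)` because `∏ᵢ (1 + λᵢ/σ²) ≤ exp (tr K/σ²)`, while the
quadratic form differs from `‖y - m‖²/σ²` by at most `tr K ‖y - m‖²/σ⁴`, since
`σ⁻² - (σ² + λᵢ)⁻¹ ≤ λᵢ/σ⁴`.
-/

open Matrix Real MeasureTheory

namespace Real

lemma exp_neg_sub_exp_neg_le {a b : ℝ} (ha : 0 ≤ a) (hab : a ≤ b) :
    exp (-a) - exp (-b) ≤ b - a := by
  have hfactor : exp (-a) - exp (-b) = exp (-a) * (1 - exp (-(b - a))) := by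
    rw [mul_sub, mul_one, ← exp_add]; ring_nf
  have hexp : exp (-a) ≤ 1 := exp_le_one_iff.2 (neg_nonpos.2 ha)
  have hgap : 1 - exp (-(b - a)) ≤ b - a := by linarith [one_sub_le_exp_neg (b - a)]
  have hgap₀ : 0 ≤ 1 - exp (-(b - a)) :=
    sub_nonneg.2 (exp_le_one_iff.2 (neg_nonpos.2 (sub_nonneg.2 hab)))
  rw [hfactor]
  exact (mul_le_of_le_one_left hgap₀ hexp).trans hgap

lemma abs_exp_neg_sub_exp_neg_le {a b : ℝ} (ha : 0 ≤ a) (hb : 0 ≤ b) :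
    |exp (-a) - exp (-b)| ≤ |a - b| := by
  rcases le_total a b with hab | hba
  · rw [abs_of_nonneg (by simpa using exp_le_exp.2 (neg_le_neg hab)),
      abs_of_nonpos (sub_nonpos.2 hab)]
    linarith [exp_neg_sub_exp_neg_le ha hab]
  · rw [abs_of_nonpos (by simpa using exp_le_exp.2 (neg_le_neg hba)),
      abs_of_nonneg (sub_nonneg.2 hba)]
    linarith [exp_neg_sub_exp_neg_le hb hba]

lemma one_sub_half_le_rpow_neg_half {P s : ℝ} (hP : 1 ≤ P) (hPs : P ≤ exp s) :
    1 - s / 2 ≤ P ^ (-(1 : ℝ) / 2) := calc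
  1 - s / 2 ≤ exp (-(s / 2)) := one_sub_le_exp_neg _
  _ = exp s ^ (-(1 : ℝ) / 2) := by rw [← exp_mul]; ring_nf
  _ ≤ P ^ (-(1 : ℝ) / 2) := rpow_le_rpow_of_nonpos (by positivity) hPs (by norm_num)

end Real

lemma abs_mul_sub_mul_le {A a B b : ℝ} (hA : 0 ≤ A) (hAa : A ≤ a) (hb : 0 ≤ b)
    (hbB : b ≤ B) (hB : B ≤ 1) : |A * B - a * b| ≤ (a - A) + a * (B - b) := by
  have h₁ : 0 ≤ (a - A) * B := mul_nonneg (sub_nonneg.2 hAa) (hb.trans hbB)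
  have h₂ : (a - A) * B ≤ a - A := mul_le_of_le_one_right (sub_nonneg.2 hAa) hB
  have h₃ : 0 ≤ a * (B - b) := mul_nonneg (hA.trans hAa) (sub_nonneg.2 hbB)
  rw [abs_le]; constructor <;> nlinarith

namespace Matrix

variable {ι : Type*} [Fintype ι] [DecidableEq ι]

lemma dotProduct_conj_diagonal_mulVec (U : Matrix ι ι ℝ) (d v : ι → ℝ) :
    v ⬝ᵥ ((U * diagonal d * star U) *ᵥ v) = ∑ i, d i * (star U *ᵥ v) i ^ 2 := by
  rw [← mulVec_mulVec, ← mulVec_mulVec, dotProduct_mulVec, ← mulVec_transpose]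
  simp only [dotProduct, mulVec_diagonal, star_eq_conjTranspose,
    conjTranspose_eq_transpose_of_trivial]
  exact Finset.sum_congr rfl fun i _ => by ring

variable {U : Matrix ι ι ℝ}

lemma sum_sq_star_mulVec (hU : U ∈ unitaryGroup ι ℝ) (v : ι → ℝ) :
    ∑ i, (star U *ᵥ v) i ^ 2 = ∑ i, v i ^ 2 := by
  have h := dotProduct_conj_diagonal_mulVec U (fun _ => 1) v
  simp only [diagonal_one, Matrix.mul_one, Unitary.mul_star_self_of_mem hU, one_mulVec,
    one_mul] at h
  rw [← h, dotProduct]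
  exact Finset.sum_congr rfl fun i _ => (sq _).symm

lemma det_conj_diagonal (hU : U ∈ unitaryGroup ι ℝ) (d : ι → ℝ) :
    (U * diagonal d * star U).det = ∏ i, d i := by
  rw [det_mul_comm, ← Matrix.mul_assoc, Unitary.star_mul_self_of_mem hU, Matrix.one_mul,
    det_diagonal]

lemma inv_conj_diagonal (hU : U ∈ unitaryGroup ι ℝ) {d : ι → ℝ} (hd : ∀ i, d i ≠ 0) :
    (U * diagonal d * star U)⁻¹ = U * diagonal (fun i => (d i)⁻¹) * star U := by
  refine inv_eq_right_inv ?_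
  have hdd : diagonal d * diagonal (fun i => (d i)⁻¹) = 1 := by
    rw [diagonal_mul_diagonal, ← diagonal_one]
    exact congrArg diagonal (funext fun i => mul_inv_cancel₀ (hd i))
  calc U * diagonal d * star U * (U * diagonal (fun i => (d i)⁻¹) * star U)
      = U * (diagonal d * (star U * U) * diagonal (fun i => (d i)⁻¹)) * star U := by
        simp only [Matrix.mul_assoc]
    _ = 1 := by
        rw [Unitary.star_mul_self_of_mem hU, Matrix.mul_one, hdd, Matrix.mul_one,
          Unitary.mul_star_self_of_mem hU]

lemma IsHermitian.smul_one_add_eq {K : Matrix ι ι ℝ} (hK : K.IsHermitian) (c : ℝ) :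
    c • (1 : Matrix ι ι ℝ) + K =
      (hK.eigenvectorUnitary : Matrix ι ι ℝ) * diagonal (fun i => c + hK.eigenvalues i) *
        star (hK.eigenvectorUnitary : Matrix ι ι ℝ) := by
  have hspec := hK.spectral_theorem
  rw [Unitary.conjStarAlgAut_apply, RCLike.ofReal_real_eq_id, Function.id_comp] at hspec
  have hdiag : diagonal (fun i => c + hK.eigenvalues i) = c • 1 + diagonal hK.eigenvalues := by
    rw [← diagonal_add, smul_one_eq_diagonal]
  rw [hdiag, Matrix.mul_add, Matrix.add_mul, ← hspec, Matrix.mul_smul, Matrix.mul_one,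
    Matrix.smul_mul, Unitary.mul_star_self_of_mem hK.eigenvectorUnitary.2]

end Matrix

section Likelihoods

variable {ι : Type*} [Fintype ι]

lemma abs_norm_sub_sq_sub_norm_sub_sq_le {ε' C : ℝ} (y u v : EuclideanSpace ℝ ι)
    (h : ∀ i, |u i - v i| ≤ ε' ∧ |2 * y i - u i - v i| ≤ C) :
    |‖y - u‖ ^ 2 - ‖y - v‖ ^ 2| ≤ Fintype.card ι * C * ε' := by
  simp only [EuclideanSpace.norm_sq_eq, Real.norm_eq_abs, sq_abs, ← Finset.sum_sub_distrib]
  calc |∑ i, ((y - u) i ^ 2 - (y - v) i ^ 2)|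
      ≤ ∑ i, |(y - u) i ^ 2 - (y - v) i ^ 2| := Finset.abs_sum_le_sum_abs _ _
    _ ≤ ∑ _i : ι, C * ε' := Finset.sum_le_sum fun i _ => by
        have hfactor : (y - u) i ^ 2 - (y - v) i ^ 2 = (2 * y i - u i - v i) * (v i - u i) := by
          simp only [PiLp.sub_apply]; ring
        rw [hfactor, abs_mul, abs_sub_comm (v i)]
        exact mul_le_mul (h i).2 (h i).1 (abs_nonneg _) ((abs_nonneg _).trans (h i).2)
    _ = Fintype.card ι * C * ε' := by simp [mul_assoc]

lemma abs_exp_norm_sub_sq_sub_le {σ ε' C : ℝ} (hσ : 0 < σ) (y u v : EuclideanSpace ℝ ι)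
    (h : ∀ i, |u i - v i| ≤ ε' ∧ |2 * y i - u i - v i| ≤ C) :
    |exp (-(‖y - u‖ ^ 2) / (2 * σ ^ 2)) - exp (-(‖y - v‖ ^ 2) / (2 * σ ^ 2))| ≤
      Fintype.card ι * C * ε' / (2 * σ ^ 2) := by
  rw [neg_div, neg_div]
  refine (abs_exp_neg_sub_exp_neg_le (by positivity) (by positivity)).trans ?_
  rw [← sub_div, abs_div, abs_of_pos (by positivity : (0 : ℝ) < 2 * σ ^ 2)]
  gcongr
  exact abs_norm_sub_sq_sub_norm_sub_sq_le y u v h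

lemma rpow_neg_half_prod_add_bounds {σ : ℝ} (hσ : 0 < σ) {l : ι → ℝ}
    (hl : ∀ i, 0 ≤ l i) :
    σ ^ (-(Fintype.card ι : ℝ)) * (1 - (∑ i, l i) / (2 * σ ^ 2)) ≤
        (∏ i, (σ ^ 2 + l i)) ^ (-(1 : ℝ) / 2) ∧
      (∏ i, (σ ^ 2 + l i)) ^ (-(1 : ℝ) / 2) ≤ σ ^ (-(Fintype.card ι : ℝ)) := by
  set P := ∏ i, (1 + l i / σ ^ 2)
  have hP : 1 ≤ P := Finset.one_le_prod fun i _ => by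
    have := hl i
    simp only [le_add_iff_nonneg_right]
    positivity
  have hPexp : P ≤ exp (∑ i, l i / σ ^ 2) :=
    prod_one_add_le_exp_sum _ fun i => by have := hl i; positivity
  have hsplit : (∏ i, (σ ^ 2 + l i)) ^ (-(1 : ℝ) / 2) =
      σ ^ (-(Fintype.card ι : ℝ)) * P ^ (-(1 : ℝ) / 2) := by
    have hprod : ∏ i, (σ ^ 2 + l i) = (σ ^ 2) ^ Fintype.card ι * P := by
      rw [← Finset.card_univ, ← Finset.prod_const, ← Finset.prod_mul_distrib]
      exact Finset.prod_congr rfl fun i _ => by field_simp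
    rw [hprod, mul_rpow (by positivity) (by positivity), ← rpow_natCast, ← rpow_natCast σ 2,
      ← rpow_mul hσ.le, ← rpow_mul hσ.le]
    congr 2
    push_cast; ring
  have hσn : 0 < σ ^ (-(Fintype.card ι : ℝ)) := rpow_pos_of_pos hσ _
  rw [hsplit]
  constructor
  · gcongr
    have h := one_sub_half_le_rpow_neg_half hP hPexp
    rwa [← Finset.sum_div, div_div, mul_comm (σ ^ 2)] at h
  · exact mul_le_of_le_one_right hσn.le (rpow_le_one_of_one_le_of_nonpos hP (by norm_num))

lemma sum_inv_add_mul_sq_bounds {σ : ℝ} (hσ : 0 < σ) {l : ι → ℝ} (hl : ∀ i, 0 ≤ l i)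
    (w : ι → ℝ) :
    0 ≤ ∑ i, (σ ^ 2 + l i)⁻¹ * w i ^ 2 ∧
      ∑ i, (σ ^ 2 + l i)⁻¹ * w i ^ 2 ≤ (∑ i, w i ^ 2) / σ ^ 2 ∧
      (∑ i, w i ^ 2) / σ ^ 2 - ∑ i, (σ ^ 2 + l i)⁻¹ * w i ^ 2 ≤
        (∑ i, l i) / σ ^ 2 * ((∑ i, w i ^ 2) / σ ^ 2) := by
  have hS : ∀ i, l i ≤ ∑ j, l j := fun i =>
    Finset.single_le_sum (fun j _ => hl j) (Finset.mem_univ i)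
  have hinv : ∀ i, 0 ≤ (σ ^ 2)⁻¹ - (σ ^ 2 + l i)⁻¹ ∧
      (σ ^ 2)⁻¹ - (σ ^ 2 + l i)⁻¹ ≤ (∑ j, l j) / σ ^ 2 / σ ^ 2 := fun i => by
    have hli := hl i
    have hsub : (σ ^ 2)⁻¹ - (σ ^ 2 + l i)⁻¹ = l i / (σ ^ 2 * (σ ^ 2 + l i)) := by
      field_simp; ring
    rw [hsub, div_div]
    exact ⟨by positivity,
      div_le_div₀ (hli.trans (hS i)) (hS i) (by positivity) (by nlinarith)⟩
  refine ⟨Finset.sum_nonneg fun i _ => by have := hl i; positivity, ?_, ?_⟩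
  · rw [Finset.sum_div]
    exact Finset.sum_le_sum fun i _ => by
      rw [div_eq_inv_mul]
      exact mul_le_mul_of_nonneg_right (sub_nonneg.1 (hinv i).1) (sq_nonneg _)
  · rw [Finset.sum_div, ← Finset.sum_sub_distrib, Finset.mul_sum]
    exact Finset.sum_le_sum fun i _ => by
      rw [div_eq_inv_mul, ← sub_mul, ← mul_assoc, ← div_eq_mul_inv]
      exact mul_le_mul_of_nonneg_right (hinv i).2 (sq_nonneg _)

lemma abs_rpow_prod_mul_exp_sub_le {σ : ℝ} (hσ : 0 < σ) {l : ι → ℝ}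
    (hl : ∀ i, 0 ≤ l i) (w : ι → ℝ) :
    |(∏ i, (σ ^ 2 + l i)) ^ (-(1 : ℝ) / 2) *
          exp (-(1 / 2) * ∑ i, (σ ^ 2 + l i)⁻¹ * w i ^ 2) -
        σ ^ (-(Fintype.card ι : ℝ)) * exp (-(∑ i, w i ^ 2) / (2 * σ ^ 2))| ≤
      σ ^ (-(Fintype.card ι : ℝ)) * ((∑ i, l i) / (2 * σ ^ 2)) *
        (1 + (∑ i, w i ^ 2) / σ ^ 2) := by
  obtain ⟨hAlow, hAa⟩ := rpow_neg_half_prod_add_bounds hσ hl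
  obtain ⟨hq, hqq₀, hq₀q⟩ := sum_inv_add_mul_sq_bounds hσ hl w
  set q := ∑ i, (σ ^ 2 + l i)⁻¹ * w i ^ 2
  set q₀ := (∑ i, w i ^ 2) / σ ^ 2 with hq₀
  set a := σ ^ (-(Fintype.card ι : ℝ))
  have ha : 0 ≤ a := (rpow_pos_of_pos hσ _).le
  have hA : 0 ≤ (∏ i, (σ ^ 2 + l i)) ^ (-(1 : ℝ) / 2) :=
    rpow_nonneg (Finset.prod_nonneg fun i _ => by have := hl i; positivity) _
  have hB : exp (-(1 / 2) * q) = exp (-(q / 2)) := by ring_nf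
  have hb : exp (-(∑ i, w i ^ 2) / (2 * σ ^ 2)) = exp (-(q₀ / 2)) := by
    rw [hq₀, div_div, mul_comm (σ ^ 2), neg_div]
  rw [hB, hb]
  calc _ ≤ (a - (∏ i, (σ ^ 2 + l i)) ^ (-(1 : ℝ) / 2)) +
        a * (exp (-(q / 2)) - exp (-(q₀ / 2))) :=
        abs_mul_sub_mul_le hA hAa (exp_pos _).le (exp_le_exp.2 (by linarith))
          (exp_le_one_iff.2 (by linarith))
    _ ≤ a * ((∑ i, l i) / (2 * σ ^ 2)) + a * ((∑ i, l i) / σ ^ 2 * q₀ / 2) := by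
        gcongr
        · linarith
        · have hexp := exp_neg_sub_exp_neg_le (a := q / 2) (b := q₀ / 2) (by linarith)
            (by linarith)
          linarith
    _ = _ := by ring

lemma abs_det_rpow_mul_exp_sub_le [DecidableEq ι] {σ : ℝ} (hσ : 0 < σ) {K : Matrix ι ι ℝ}
    (hK : K.PosSemidef) (v : EuclideanSpace ℝ ι) :
    |((σ ^ 2 • (1 : Matrix ι ι ℝ) + K).det) ^ (-(1 : ℝ) / 2) *
        exp (-(1 / 2) * (v ⬝ᵥ ((σ ^ 2 • (1 : Matrix ι ι ℝ) + K)⁻¹ *ᵥ v))) -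
        σ ^ (-(Fintype.card ι : ℝ)) * exp (-(‖v‖ ^ 2) / (2 * σ ^ 2))| ≤
      σ ^ (-(Fintype.card ι : ℝ)) * (K.trace / (2 * σ ^ 2)) * (1 + ‖v‖ ^ 2 / σ ^ 2) := by
  have hU := hK.isHermitian.eigenvectorUnitary.2
  have hpos : ∀ i, σ ^ 2 + hK.isHermitian.eigenvalues i ≠ 0 := fun i =>
    (add_pos_of_pos_of_nonneg (by positivity) (hK.eigenvalues_nonneg i)).ne'
  have hnorm : ‖v‖ ^ 2 = ∑ i, v i ^ 2 := by simp [EuclideanSpace.norm_sq_eq]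
  rw [hK.isHermitian.smul_one_add_eq, det_conj_diagonal hU, inv_conj_diagonal hU hpos,
    dotProduct_conj_diagonal_mulVec, hK.isHermitian.trace_eq_sum_eigenvalues, hnorm,
    ← sum_sq_star_mulVec hU]
  simpa using abs_rpow_prod_mul_exp_sub_le hσ hK.eigenvalues_nonneg _

end Likelihoods

section Measurability

variable {α ι : Type*} [MeasurableSpace α] [Fintype ι] [DecidableEq ι]
  {M : α → Matrix ι ι ℝ}

lemma measurable_det_of_entries (hM : ∀ i j, Measurable fun x => M x i j) :
    Measurable fun x => (M x).det := by
  simp_rw [det_apply']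
  exact Finset.measurable_sum _ fun p _ =>
    (Finset.measurable_prod _ fun i _ => hM (p i) i).const_mul _

lemma measurable_inv_apply_of_entries (hM : ∀ i j, Measurable fun x => M x i j) (i j : ι) :
    Measurable fun x => (M x)⁻¹ i j := by
  simp only [inv_def, Matrix.smul_apply, smul_eq_mul, Ring.inverse_eq_inv', adjugate_apply]
  refine (measurable_det_of_entries hM).inv.mul (measurable_det_of_entries fun k l => ?_)
  simp only [updateRow_apply]
  split_ifs
  exacts [measurable_const, hM k l]

lemma measurable_dotProduct_inv_mulVec_of_entries (hM : ∀ i j, Measurable fun x => M x i j)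
    {v : α → ι → ℝ} (hv : ∀ i, Measurable fun x => v x i) :
    Measurable fun x => v x ⬝ᵥ ((M x)⁻¹ *ᵥ v x) := by
  simp only [dotProduct, mulVec]
  exact Finset.measurable_sum _ fun i _ => (hv i).mul <|
    Finset.measurable_sum _ fun j _ => (measurable_inv_apply_of_entries hM i j).mul (hv j)

end Measurability

lemma abs_integral_sub_integral_le {α : Type*} [MeasurableSpace α] {μ : Measure α}
    [IsProbabilityMeasure μ] {g h : α → ℝ} {E : ℝ} (hg : Integrable g μ)
    (hh : AEStronglyMeasurable h μ) (hgh : ∀ᵐ x ∂μ, |g x - h x| ≤ E) :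
    |∫ x, g x ∂μ - ∫ x, h x ∂μ| ≤ E := by
  have hdiff : Integrable (g - h) μ :=
    Integrable.of_bound (hg.aestronglyMeasurable.sub hh) E (by simpa using hgh)
  have hh' : Integrable h μ := by simpa using hg.sub hdiff
  have hbound := norm_integral_le_of_norm_le_const (μ := μ) (f := fun x => g x - h x) hgh
  rwa [probReal_univ, mul_one, Real.norm_eq_abs, integral_sub hg hh'] at hbound

lemma abs_likelihood_sub_le {n : ℕ} {σ ε ε' C R : ℝ} (hσ : 0 < σ)
    {y u v : EuclideanSpace ℝ (Fin n)} {K : Matrix (Fin n) (Fin n) ℝ}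
    (huv : ∀ i, |u i - v i| ≤ ε' ∧ |2 * y i - u i - v i| ≤ C) (hK : K.PosSemidef)
    (htr : K.trace ≤ n * ε) (hv : ‖y - v‖ ≤ R) :
    |(2 * π * σ ^ 2) ^ (-(n : ℝ) / 2) * exp (-(‖y - u‖ ^ 2) / (2 * σ ^ 2)) -
        (2 * π) ^ (-(n : ℝ) / 2) *
          ((σ ^ 2 • (1 : Matrix (Fin n) (Fin n) ℝ) + K).det) ^ (-(1 : ℝ) / 2) *
          exp (-(1 / 2) *
            ((y - v) ⬝ᵥ ((σ ^ 2 • (1 : Matrix (Fin n) (Fin n) ℝ) + K)⁻¹ *ᵥ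
              (y - v))))| ≤
      (2 * π * σ ^ 2) ^ (-(n : ℝ) / 2) * (n * C * ε' / (2 * σ ^ 2)) +
        (2 * π) ^ (-(n : ℝ) / 2) * σ ^ (-(n : ℝ)) * (n * ε / (2 * σ ^ 2)) *
          (1 + R ^ 2 / σ ^ 2) := by
  set c := (2 * π) ^ (-(n : ℝ) / 2)
  have hc : 0 ≤ c := rpow_nonneg (by positivity) _
  have hσn : 0 ≤ σ ^ (-(n : ℝ)) := rpow_nonneg hσ.le _
  have hsplit : (2 * π * σ ^ 2) ^ (-(n : ℝ) / 2) = c * σ ^ (-(n : ℝ)) := by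
    rw [mul_rpow (by positivity) (by positivity), ← rpow_natCast σ 2, ← rpow_mul hσ.le]
    congr 2
    push_cast; ring
  have hexact := abs_exp_norm_sub_sq_sub_le hσ y u v huv
  have hmixed := abs_det_rpow_mul_exp_sub_le hσ hK (y - v)
  rw [Fintype.card_fin] at hexact hmixed
  set e := exp (-(‖y - v‖ ^ 2) / (2 * σ ^ 2))
  set D := ((σ ^ 2 • (1 : Matrix (Fin n) (Fin n) ℝ) + K).det) ^ (-(1 : ℝ) / 2) *
    exp (-(1 / 2) *
      ((y - v) ⬝ᵥ ((σ ^ 2 • (1 : Matrix (Fin n) (Fin n) ℝ) + K)⁻¹ *ᵥ (y - v))))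
  rw [hsplit]
  calc _ = |c * σ ^ (-(n : ℝ)) * (exp (-(‖y - u‖ ^ 2) / (2 * σ ^ 2)) - e) +
        c * -(D - σ ^ (-(n : ℝ)) * e)| := by congr 1; ring
    _ ≤ c * σ ^ (-(n : ℝ)) * |exp (-(‖y - u‖ ^ 2) / (2 * σ ^ 2)) - e| +
        c * |D - σ ^ (-(n : ℝ)) * e| := by
      refine (abs_add_le _ _).trans_eq ?_
      simp only [abs_mul, abs_neg, abs_of_nonneg hc, abs_of_nonneg hσn]
    _ ≤ c * σ ^ (-(n : ℝ)) * (n * C * ε' / (2 * σ ^ 2)) +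
        c * (σ ^ (-(n : ℝ)) * (n * ε / (2 * σ ^ 2)) * (1 + R ^ 2 / σ ^ 2)) := by
      have htr₀ := hK.trace_nonneg
      gcongr
      calc _ ≤ _ := hmixed
        _ ≤ σ ^ (-(n : ℝ)) * (K.trace / (2 * σ ^ 2)) * (1 + R ^ 2 / σ ^ 2) := by gcongr
        _ ≤ _ := by gcongr
    _ = _ := by ring

theorem stmt_11_general (d n : ℕ) (σ ε ε' C R : ℝ)
    (hσ : 0 < σ)
    (μ : Measure (Fin d → ℝ)) [IsProbabilityMeasure μ]
    (y : EuclideanSpace ℝ (Fin n))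
    (f m : (Fin d → ℝ) → EuclideanSpace ℝ (Fin n)) (hf : Measurable f) (hm : Measurable m)
    (K : (Fin d → ℝ) → Matrix (Fin n) (Fin n) ℝ)
    (hKmeas : ∀ i j, Measurable fun ψ => K ψ i j)
    (hb : ∀ᵐ ψ ∂μ,
      (∀ i, |f ψ i - m ψ i| ≤ ε' ∧ |2 * y i - f ψ i - m ψ i| ≤ C) ∧
      ((K ψ).PosSemidef ∧ (K ψ).trace ≤ n * ε) ∧ ‖y - m ψ‖ ≤ R) :
    |(∫ ψ, (2 * Real.pi * σ ^ 2) ^ (-(n : ℝ) / 2) *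
            Real.exp (-(‖y - f ψ‖ ^ 2) / (2 * σ ^ 2)) ∂μ) -
        (∫ ψ, (2 * Real.pi) ^ (-(n : ℝ) / 2) *
            ((σ ^ 2 • (1 : Matrix (Fin n) (Fin n) ℝ) + K ψ).det) ^ (-(1 : ℝ) / 2) *
            Real.exp (-(1 / 2) *
              ((y - m ψ) ⬝ᵥ ((σ ^ 2 • (1 : Matrix (Fin n) (Fin n) ℝ) + K ψ)⁻¹ *ᵥ (y - m ψ)))) ∂μ)| ≤
      (2 * Real.pi * σ ^ 2) ^ (-(n : ℝ) / 2) * (n * C * ε' / (2 * σ ^ 2)) +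
        (2 * Real.pi) ^ (-(n : ℝ) / 2) * σ ^ (-(n : ℝ)) * (n * ε / (2 * σ ^ 2)) *
          (1 + R ^ 2 / σ ^ 2) := by
  have hcov : ∀ i j, Measurable fun ψ => (σ ^ 2 • (1 : Matrix (Fin n) (Fin n) ℝ) + K ψ) i j :=
    fun i j => measurable_const.add (hKmeas i j)
  have hres : ∀ i, Measurable fun ψ => (y - m ψ) i :=
    fun i => (EuclideanSpace.proj i).continuous.measurable.comp (measurable_const.sub hm)
  refine abs_integral_sub_integral_le ?_ ?_ <| hb.mono fun ψ ⟨huv, ⟨hK, htr⟩, hv⟩ =>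
    abs_likelihood_sub_le hσ huv hK htr hv
  · refine Integrable.of_bound (by fun_prop) ((2 * π * σ ^ 2) ^ (-(n : ℝ) / 2))
      (ae_of_all _ fun ψ => ?_)
    rw [norm_mul, norm_of_nonneg (by positivity), norm_of_nonneg (exp_pos _).le]
    exact mul_le_of_le_one_right (by positivity) <| exp_le_one_iff.2 <|
      div_nonpos_of_nonpos_of_nonneg (neg_nonpos.2 (by positivity)) (by positivity)
  · exact ((measurable_const.mul ((measurable_det_of_entries hcov).pow_const _)).mul
      (measurable_const.mul
        (measurable_dotProduct_inv_mulVec_of_entries hcov hres)).exp).aestronglyMeasurable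

theorem stmt_11 (d n : ℕ) (hn : 1 ≤ n) (σ ε ε' C R : ℝ)
    (hσ : 0 < σ) (hε : 0 ≤ ε) (hε' : 0 ≤ ε') (hC : 0 ≤ C) (hR : 0 ≤ R)
    (μ : Measure (Fin d → ℝ)) [IsProbabilityMeasure μ]
    (y : EuclideanSpace ℝ (Fin n))
    (f m : (Fin d → ℝ) → EuclideanSpace ℝ (Fin n)) (hf : Measurable f) (hm : Measurable m)
    (K : (Fin d → ℝ) → Matrix (Fin n) (Fin n) ℝ)
    (hKmeas : ∀ i j, Measurable fun ψ => K ψ i j)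
    (hb : ∀ᵐ ψ ∂μ,
      (∀ i, |f ψ i - m ψ i| ≤ ε' ∧ |2 * y i - f ψ i - m ψ i| ≤ C) ∧
      ((K ψ).PosSemidef ∧ (K ψ).trace ≤ n * ε) ∧ ‖y - m ψ‖ ≤ R) :
    |(∫ ψ, (2 * Real.pi * σ ^ 2) ^ (-(n : ℝ) / 2) *
            Real.exp (-(‖y - f ψ‖ ^ 2) / (2 * σ ^ 2)) ∂μ) -
        (∫ ψ, (2 * Real.pi) ^ (-(n : ℝ) / 2) *
            ((σ ^ 2 • (1 : Matrix (Fin n) (Fin n) ℝ) + K ψ).det) ^ (-(1 : ℝ) / 2) *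
            Real.exp (-(1 / 2) *
              ((y - m ψ) ⬝ᵥ ((σ ^ 2 • (1 : Matrix (Fin n) (Fin n) ℝ) + K ψ)⁻¹ *ᵥ (y - m ψ)))) ∂μ)| ≤
      (2 * Real.pi * σ ^ 2) ^ (-(n : ℝ) / 2) * (n * C * ε' / (2 * σ ^ 2)) +
        (2 * Real.pi) ^ (-(n : ℝ) / 2) * σ ^ (-(n : ℝ)) * (n * ε / (2 * σ ^ 2)) *
          (1 + R ^ 2 / σ ^ 2) :=
  stmt_11_general d n σ ε ε' C R hσ μ y f m hf hm K hKmeas hb
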